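/- arXiv:2303.02082 — 3 statements merged into one kernel-verified Lean document; each statement's English description precedes it below -/
import Mathlib

section
/- A CAT(0) space X satisfies the geodesic extension property if and only if it satisfies the local geodesic extension property (i.e., every point has an open ball satisfying the geodesic extension property). -/
open Set MeasureTheory Metric

def IsGeodesicSegment {X : Type*} [MetricSpace X] (γ : ℝ → X) : Prop :=
  ∀ s ∈ Set.Icc (0:ℝ) 1, ∀ t ∈ Set.Icc (0:ℝ) 1,
    dist (γ s) (γ t) = |s - t| * dist (γ 0) (γ 1)

def GeodesicSpace (X : Type*) [MetricSpace X] : Prop :=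
  ∀ x y : X, ∃ γ : ℝ → X, γ 0 = x ∧ γ 1 = y ∧ IsGeodesicSegment γ

def CAT0 (X : Type*) [MetricSpace X] : Prop :=
  GeodesicSpace X ∧ ∀ γ : ℝ → X, IsGeodesicSegment γ → ∀ z : X, ∀ t ∈ Set.Icc (0:ℝ) 1,
    dist (γ t) z ^ 2 ≤ (1 - t) * dist (γ 0) z ^ 2 + t * dist (γ 1) z ^ 2
      - t * (1 - t) * dist (γ 0) (γ 1) ^ 2

/-- A geodesic segment lying in a set `S`. -/
def GeodesicIn {X : Type*} [MetricSpace X] (S : Set X) (γ : ℝ → X) : Prop :=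
  IsGeodesicSegment γ ∧ ∀ t ∈ Set.Icc (0:ℝ) 1, γ t ∈ S

/-- A geodesic `γ` in `S` is extendable in `S` if some geodesic `γ'` in `S` contains `γ` in
its interior. -/
def ExtendableIn {X : Type*} [MetricSpace X] (S : Set X) (γ : ℝ → X) : Prop :=
  ∃ γ' : ℝ → X, GeodesicIn S γ' ∧ γ '' Set.Icc 0 1 ⊆ γ' '' Set.Ioo 0 1

/-- `S` has the geodesic extension property if every geodesic in `S` is extendable in `S`. -/
def GeodesicExtensionProperty {X : Type*} [MetricSpace X] (S : Set X) : Prop :=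
  ∀ γ : ℝ → X, GeodesicIn S γ → ExtendableIn S γ

/-! In a CAT(0) space geodesics are unique and distance functions are convex along them, so a
segment `[x, y]` prolongs beyond `y` as soon as a short terminal piece `[p, y]` does. Hence both
the global and the local extension property make every segment `[x, y]` prolongable to a point
`z ≠ y` with `d(x, z) = d(x, y) + d(y, z)`. Conversely, prolonging a segment slightly at both ends
gives points `w`, `z` such that, by uniqueness, the geodesic from `w` to `z` contains the segment
in its interior, and by convexity it stays in any ball that contains `w` and `z`. -/

section

variable {X : Type*} [MetricSpace X]

def IsGeodesicallyConvex (S : Set X) : Prop :=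
  ∀ γ : ℝ → X, IsGeodesicSegment γ → γ 0 ∈ S → γ 1 ∈ S → ∀ t ∈ Icc (0:ℝ) 1, γ t ∈ S

variable (X) in
def HasSegmentProlongation : Prop :=
  ∀ x y : X, x ≠ y → ∃ z ≠ y, dist x z = dist x y + dist y z

lemma isGeodesicallyConvex_univ : IsGeodesicallyConvex (univ : Set X) :=
  fun _ _ _ _ _ _ => mem_univ _

namespace IsGeodesicSegment

variable {γ : ℝ → X}

lemma dist_eq_of_le (hγ : IsGeodesicSegment γ) {s t : ℝ} (hs : s ∈ Icc (0:ℝ) 1)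
    (ht : t ∈ Icc (0:ℝ) 1) (hst : s ≤ t) :
    dist (γ s) (γ t) = (t - s) * dist (γ 0) (γ 1) := by
  rw [hγ s hs t ht, abs_of_nonpos (by linarith), neg_sub]

lemma dist_zero_apply (hγ : IsGeodesicSegment γ) {t : ℝ} (ht : t ∈ Icc (0:ℝ) 1) :
    dist (γ 0) (γ t) = t * dist (γ 0) (γ 1) := by
  simpa using hγ.dist_eq_of_le (left_mem_Icc.2 zero_le_one) ht ht.1

lemma dist_apply_one (hγ : IsGeodesicSegment γ) {t : ℝ} (ht : t ∈ Icc (0:ℝ) 1) :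
    dist (γ t) (γ 1) = (1 - t) * dist (γ 0) (γ 1) :=
  hγ.dist_eq_of_le ht (right_mem_Icc.2 zero_le_one) ht.2

lemma extendableIn_of_eq (hγ : IsGeodesicSegment γ) (h01 : γ 0 = γ 1) {S : Set X}
    (hS : γ 0 ∈ S) : ExtendableIn S γ := by
  refine ⟨fun _ => γ 0, ⟨fun _ _ _ _ => by simp, fun _ _ => hS⟩, ?_⟩
  rintro _ ⟨t, ht, rfl⟩
  refine ⟨1 / 2, by norm_num, (dist_eq_zero.1 ?_)⟩
  rw [hγ.dist_zero_apply ht, h01, dist_self, mul_zero]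

end IsGeodesicSegment

lemma ExtendableIn.exists_prolongation {S : Set X} {σ : ℝ → X} (hext : ExtendableIn S σ)
    (hσ : σ 0 ≠ σ 1) : ∃ z ≠ σ 1, dist (σ 0) z = dist (σ 0) (σ 1) + dist (σ 1) z := by
  obtain ⟨τ, ⟨hτ, -⟩, hsub⟩ := hext
  obtain ⟨a, ha, hτa⟩ := hsub ⟨0, left_mem_Icc.2 zero_le_one, rfl⟩
  obtain ⟨b, hb, hτb⟩ := hsub ⟨1, right_mem_Icc.2 zero_le_one, rfl⟩
  have hab : a ≠ b := by rintro rfl; exact hσ (hτa.symm.trans hτb)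
  -- prolong `[τ a, τ b]` to the endpoint of `τ` lying beyond `τ b`
  obtain ⟨e, he, hbe, habe⟩ : ∃ e ∈ Icc (0:ℝ) 1, b ≠ e ∧ |a - e| = |a - b| + |b - e| := by
    rcases hab.lt_or_gt with h | h
    · refine ⟨1, right_mem_Icc.2 zero_le_one, hb.2.ne, ?_⟩
      rw [abs_of_neg (by linarith [ha.2]), abs_of_neg (sub_neg.2 h),
        abs_of_neg (by linarith [hb.2])]
      ring
    · refine ⟨0, left_mem_Icc.2 zero_le_one, hb.1.ne', ?_⟩
      rw [abs_of_pos (by linarith [ha.1]), abs_of_pos (sub_pos.2 h),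
        abs_of_pos (by linarith [hb.1])]
      ring
  have hIab := hτ a (Ioo_subset_Icc_self ha) b (Ioo_subset_Icc_self hb)
  have hL : 0 < dist (τ 0) (τ 1) := by
    have hne : dist (τ a) (τ b) ≠ 0 := dist_ne_zero.2 (by rwa [hτa, hτb])
    rw [hIab] at hne
    exact lt_of_le_of_ne dist_nonneg (right_ne_zero_of_mul hne).symm
  refine ⟨τ e, fun h => ?_, ?_⟩
  · have := hτ b (Ioo_subset_Icc_self hb) e he
    rw [← hτb] at h
    rw [h, dist_self] at this
    exact (mul_pos (abs_pos.2 (sub_ne_zero.2 hbe)) hL).ne this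
  · rw [← hτa, ← hτb, hIab, hτ a (Ioo_subset_Icc_self ha) e he,
      hτ b (Ioo_subset_Icc_self hb) e he, habe, add_mul]

lemma GeodesicSpace.exists_near_between (hX : GeodesicSpace X) {x y : X} (hxy : x ≠ y)
    {ε : ℝ} (hε : 0 < ε) : ∃ p ≠ y, dist p y < ε ∧ dist x p + dist p y = dist x y := by
  obtain ⟨γ, rfl, rfl, hγ⟩ := hX x y
  set ℓ := dist (γ 0) (γ 1)
  have hℓ : 0 < ℓ := dist_pos.2 hxy
  have ht : ℓ / (ℓ + ε) ∈ Icc (0:ℝ) 1 :=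
    ⟨by positivity, (div_le_one (by positivity)).2 (by linarith)⟩
  have hd : dist (γ (ℓ / (ℓ + ε))) (γ 1) = ε * ℓ / (ℓ + ε) := by
    rw [hγ.dist_apply_one ht]; field_simp; ring
  refine ⟨γ (ℓ / (ℓ + ε)), fun h => ?_, ?_, ?_⟩
  · rw [h, dist_self] at hd
    exact (by positivity : 0 < ε * ℓ / (ℓ + ε)).ne hd
  · rw [hd, div_lt_iff₀ (by positivity)]; nlinarith
  · rw [hγ.dist_zero_apply ht, hγ.dist_apply_one ht]; ring

lemma HasSegmentProlongation.exists_near (hP : HasSegmentProlongation X) (hX : GeodesicSpace X)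
    {x y : X} (hxy : x ≠ y) {ε : ℝ} (hε : 0 < ε) :
    ∃ z ≠ y, dist y z < ε ∧ dist x z = dist x y + dist y z := by
  obtain ⟨z, hzy, hxz⟩ := hP x y hxy
  obtain ⟨p, hpy, hpε, hzpy⟩ := hX.exists_near_between hzy hε
  refine ⟨p, hpy, by rwa [dist_comm], le_antisymm (dist_triangle _ _ _) ?_⟩
  -- `y` lies between `x` and `z`, and `p` between `y` and `z`
  linarith [dist_triangle x p z, dist_comm p z, dist_comm p y, dist_comm z y]

lemma GeodesicSpace.hasSegmentProlongation (hX : GeodesicSpace X)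
    (h : GeodesicExtensionProperty (univ : Set X)) : HasSegmentProlongation X := by
  intro x y hxy
  obtain ⟨σ, rfl, rfl, hσ⟩ := hX x y
  exact (h σ ⟨hσ, fun _ _ => mem_univ _⟩).exists_prolongation hxy

namespace CAT0

lemma dist_le (hX : CAT0 X) {γ : ℝ → X} (hγ : IsGeodesicSegment γ) (z : X) {t : ℝ}
    (ht : t ∈ Icc (0:ℝ) 1) : dist (γ t) z ≤ (1 - t) * dist (γ 0) z + t * dist (γ 1) z := by
  have hab : (dist (γ 0) z - dist (γ 1) z) ^ 2 ≤ dist (γ 0) (γ 1) ^ 2 :=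
    sq_le_sq' (by linarith [dist_triangle (γ 1) (γ 0) z, dist_comm (γ 0) (γ 1)])
      (by linarith [dist_triangle (γ 0) (γ 1) z])
  have h1t : 0 ≤ 1 - t := by linarith [ht.2]
  refine (pow_le_pow_iff_left₀ dist_nonneg
    (add_nonneg (mul_nonneg h1t dist_nonneg) (mul_nonneg ht.1 dist_nonneg)) two_ne_zero).1 ?_
  set a := dist (γ 0) z
  set b := dist (γ 1) z
  calc dist (γ t) z ^ 2
      ≤ (1 - t) * a ^ 2 + t * b ^ 2 - t * (1 - t) * dist (γ 0) (γ 1) ^ 2 := hX.2 γ hγ z t ht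
    _ = ((1 - t) * a + t * b) ^ 2 + t * (1 - t) * ((a - b) ^ 2 - dist (γ 0) (γ 1) ^ 2) := by ring
    _ ≤ ((1 - t) * a + t * b) ^ 2 := by nlinarith [mul_nonneg ht.1 h1t]

lemma isGeodesicallyConvex_ball (hX : CAT0 X) (c : X) (r : ℝ) :
    IsGeodesicallyConvex (ball c r) := by
  intro γ hγ h0 h1 t ht
  rw [mem_ball] at h0 h1 ⊢
  calc dist (γ t) c ≤ (1 - t) * dist (γ 0) c + t * dist (γ 1) c := hX.dist_le hγ c ht
    _ ≤ (1 - t) * max (dist (γ 0) c) (dist (γ 1) c) + t * max (dist (γ 0) c) (dist (γ 1) c) := by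
      have ht0 : 0 ≤ t := ht.1
      have h1t : 0 ≤ 1 - t := by linarith [ht.2]
      gcongr
      exacts [le_max_left _ _, le_max_right _ _]
    _ < r := by rw [← add_mul, sub_add_cancel, one_mul]; exact max_lt h0 h1

lemma apply_eq_of_dist (hX : CAT0 X) {γ : ℝ → X} (hγ : IsGeodesicSegment γ) {p : X} {t : ℝ}
    (ht : t ∈ Icc (0:ℝ) 1) (h0 : dist (γ 0) p = t * dist (γ 0) (γ 1))
    (h1 : dist (γ 1) p = (1 - t) * dist (γ 0) (γ 1)) : γ t = p := by
  have := hX.2 γ hγ p t ht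
  rw [h0, h1] at this
  exact dist_eq_zero.1 (pow_eq_zero_iff two_ne_zero |>.1 (le_antisymm (by linarith) (sq_nonneg _)))

lemma dist_eq_add_of_between (hX : CAT0 X) {x p y z : X} (hp : dist x p + dist p y = dist x y)
    (hpy : p ≠ y) (hz : dist p z = dist p y + dist y z) : dist x z = dist x y + dist y z := by
  obtain ⟨γ, rfl, rfl, hγ⟩ := hX.1 x y
  set ℓ := dist (γ 0) (γ 1)
  have hpy' : 0 < dist p (γ 1) := dist_pos.2 hpy
  have hℓ : 0 < ℓ := by linarith [dist_nonneg (x := γ 0) (y := p)]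
  set t := dist (γ 0) p / ℓ
  have htℓ : t * ℓ = dist (γ 0) p := div_mul_cancel₀ _ hℓ.ne'
  have ht1 : t < 1 := (div_lt_one hℓ).2 (by linarith)
  have ht : t ∈ Icc (0:ℝ) 1 := ⟨by positivity, ht1.le⟩
  have hγt : γ t = p := hX.apply_eq_of_dist hγ ht htℓ.symm (by rw [dist_comm]; linarith)
  have hconv := hX.dist_le hγ z ht
  rw [hγt, hz] at hconv
  -- convexity of `dist · z` along `γ` forces `dist (γ 0) z` up to its triangle-inequality bound
  have : (1 - t) * (ℓ + dist (γ 1) z) ≤ (1 - t) * dist (γ 0) z := by nlinarith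
  exact le_antisymm (dist_triangle _ _ _) (le_of_mul_le_mul_left this (by linarith))

lemma image_subset_of_dist_eq_add (hX : CAT0 X) {Γ γ : ℝ → X} (hΓ : IsGeodesicSegment Γ)
    (hγ : IsGeodesicSegment γ) (h0 : Γ 0 ≠ γ 0) (h1 : γ 1 ≠ Γ 1)
    (hchain : dist (Γ 0) (Γ 1) = dist (Γ 0) (γ 0) + dist (γ 0) (γ 1) + dist (γ 1) (Γ 1)) :
    γ '' Icc 0 1 ⊆ Γ '' Ioo 0 1 := by
  rintro _ ⟨s, hs, rfl⟩
  set L := dist (Γ 0) (Γ 1)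
  set ℓ := dist (γ 0) (γ 1)
  have ha := dist_pos.2 h0
  have hb := dist_pos.2 h1
  have hℓ : 0 ≤ ℓ := dist_nonneg
  have hsℓ : 0 ≤ s * ℓ := mul_nonneg hs.1 hℓ
  have hL : 0 < L := by linarith
  have hleft : dist (Γ 0) (γ s) ≤ dist (Γ 0) (γ 0) + s * ℓ := by
    linarith [dist_triangle (Γ 0) (γ 0) (γ s), hγ.dist_zero_apply hs]
  have hright : dist (Γ 1) (γ s) ≤ (1 - s) * ℓ + dist (γ 1) (Γ 1) := by
    linarith [dist_triangle (Γ 1) (γ 1) (γ s), hγ.dist_apply_one hs, dist_comm (Γ 1) (γ 1),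
      dist_comm (γ 1) (γ s)]
  have htri := dist_triangle (Γ 0) (γ s) (Γ 1)
  rw [dist_comm (γ s)] at htri
  set t := (dist (Γ 0) (γ 0) + s * ℓ) / L
  have htL : t * L = dist (Γ 0) (γ 0) + s * ℓ := div_mul_cancel₀ _ hL.ne'
  have ht : t ∈ Ioo (0:ℝ) 1 :=
    ⟨by positivity, (div_lt_one hL).2 (by linarith [mul_le_of_le_one_left hℓ hs.2])⟩
  exact ⟨t, ht, hX.apply_eq_of_dist hΓ (Ioo_subset_Icc_self ht) (by linarith)
    (by rw [sub_mul, one_mul]; linarith)⟩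

lemma exists_prolongation_of_ball (hX : CAT0 X) {x y : X} (hxy : x ≠ y) {r : ℝ} (hr : 0 < r)
    (hy : GeodesicExtensionProperty (ball y r)) :
    ∃ z ≠ y, dist x z = dist x y + dist y z := by
  obtain ⟨p, hpy, hpr, hxpy⟩ := hX.1.exists_near_between hxy hr
  obtain ⟨σ, hσ0, hσ1, hσ⟩ := hX.1 p y
  have hσy : GeodesicIn (ball y r) σ := by
    refine ⟨hσ, fun t ht => ?_⟩
    rw [mem_ball, ← hσ1, hσ.dist_apply_one ht, hσ0, hσ1]
    nlinarith [ht.1, dist_nonneg (x := p) (y := y)]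
  obtain ⟨z, hzy, hz⟩ := (hy σ hσy).exists_prolongation (by rwa [hσ0, hσ1])
  rw [hσ0, hσ1] at hz
  rw [hσ1] at hzy
  exact ⟨z, hzy, hX.dist_eq_add_of_between hxpy hpy hz⟩

lemma hasSegmentProlongation_of_local (hX : CAT0 X)
    (h : ∀ y : X, ∃ r > (0:ℝ), GeodesicExtensionProperty (ball y r)) :
    HasSegmentProlongation X := by
  intro x y hxy
  obtain ⟨r, hr, hy⟩ := h y
  exact hX.exists_prolongation_of_ball hxy hr hy

lemma geodesicExtensionProperty_of_isOpen (hX : CAT0 X) (hP : HasSegmentProlongation X)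
    {S : Set X} (hSo : IsOpen S) (hSc : IsGeodesicallyConvex S) :
    GeodesicExtensionProperty S := by
  rintro γ ⟨hγ, hγS⟩
  have h0 := hγS 0 (left_mem_Icc.2 zero_le_one)
  have h1 := hγS 1 (right_mem_Icc.2 zero_le_one)
  by_cases hxy : γ 0 = γ 1
  · exact hγ.extendableIn_of_eq hxy h0
  obtain ⟨ε₀, hε₀, hS₀⟩ := Metric.isOpen_iff.1 hSo _ h0
  obtain ⟨ε₁, hε₁, hS₁⟩ := Metric.isOpen_iff.1 hSo _ h1
  obtain ⟨z, hzy, hyz, hxz⟩ := hP.exists_near hX.1 hxy hε₁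
  have hzx : z ≠ γ 0 := by
    rintro rfl
    rw [dist_self] at hxz
    linarith [dist_pos.2 hxy, dist_nonneg (x := γ 1) (y := γ 0)]
  obtain ⟨w, hwx, hxw, hzw⟩ := hP.exists_near hX.1 hzx hε₀
  obtain ⟨Γ, hΓ0, hΓ1, hΓ⟩ := hX.1 w z
  refine ⟨Γ, ⟨hΓ, hSc Γ hΓ (hΓ0 ▸ hS₀ (mem_ball'.2 hxw)) (hΓ1 ▸ hS₁ (mem_ball'.2 hyz))⟩, ?_⟩
  refine hX.image_subset_of_dist_eq_add hΓ hγ (hΓ0 ▸ hwx) (hΓ1 ▸ hzy.symm) ?_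
  rw [hΓ0, hΓ1]
  linarith [dist_comm z w, dist_comm z (γ 0), dist_comm (γ 0) w]

end CAT0

end

/-- A CAT(0) space satisfies the geodesic extension property iff it satisfies the local
geodesic extension property. -/
theorem geodesicExtension_iff_local
    {X : Type*} [MetricSpace X] (hX : CAT0 X) :
    GeodesicExtensionProperty (Set.univ : Set X) ↔
      ∀ x : X, ∃ r > (0:ℝ), GeodesicExtensionProperty (Metric.ball x r) :=
  ⟨fun h x => ⟨1, one_pos, hX.geodesicExtensionProperty_of_isOpen
      (hX.1.hasSegmentProlongation h) isOpen_ball (hX.isGeodesicallyConvex_ball x 1)⟩,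
    fun h => hX.geodesicExtensionProperty_of_isOpen (hX.hasSegmentProlongation_of_local h)
      isOpen_univ isGeodesicallyConvex_univ⟩
end

section
/- The radial projection R_γ onto a geodesic γ in a metric space is nonexpansive: d(R_γ(x), R_γ(y)) ≤ d(x,y) for all x, y ∈ X. -/
open Set Metric

/-- `p` is the radial projection of `x` onto the geodesic `γ`: the point of `γ` at distance
`min (d(γ 0, x)) (ℓ(γ))` from `γ 0`. -/
def IsRadialProj {X : Type*} [MetricSpace X] (γ : ℝ → X) (x p : X) : Prop :=
  p ∈ γ '' Set.Icc 0 1 ∧ dist (γ 0) p = min (dist (γ 0) x) (dist (γ 0) (γ 1))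

/-- The radial projection onto a geodesic is nonexpansive:
`d(R_γ x, R_γ y) ≤ d(x, y)`. -/
theorem radialProj_nonexpansive
    {X : Type*} [MetricSpace X] (γ : ℝ → X) (hγ : IsGeodesicSegment γ)
    (x y p q : X) (hp : IsRadialProj γ x p) (hq : IsRadialProj γ y q) :
    dist p q ≤ dist x y := by
  obtain ⟨⟨s, hs, rfl⟩, hps⟩ := hp
  obtain ⟨⟨t, ht, rfl⟩, hqt⟩ := hq
  set L := dist (γ 0) (γ 1) with hL
  have h01 : (0:ℝ) ∈ Set.Icc (0:ℝ) 1 := by constructor <;> norm_num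
  have hds : dist (γ 0) (γ s) = s * L := by
    rw [dist_comm, hγ s hs 0 h01]
    rw [sub_zero, abs_of_nonneg hs.1]
  have hdt : dist (γ 0) (γ t) = t * L := by
    rw [dist_comm, hγ t ht 0 h01]
    rw [sub_zero, abs_of_nonneg ht.1]
  have hst : dist (γ s) (γ t) = |s - t| * L := hγ s hs t ht
  have key : dist (γ s) (γ t) = |dist (γ 0) (γ s) - dist (γ 0) (γ t)| := by
    rw [hst, hds, hdt, ← sub_mul, abs_mul, abs_of_nonneg (dist_nonneg : 0 ≤ L)]
  rw [key, hps, hqt]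
  have h1 : |min (dist (γ 0) x) L - min (dist (γ 0) y) L| ≤ |dist (γ 0) x - dist (γ 0) y| :=
    (abs_min_sub_min_le_max _ _ _ _).trans (by simp)
  calc |min (dist (γ 0) x) L - min (dist (γ 0) y) L|
      ≤ |dist (γ 0) x - dist (γ 0) y| := h1
    _ ≤ dist x y := by rw [dist_comm (γ 0) x, dist_comm (γ 0) y]; exact abs_dist_sub_le _ _ _
end

section
/- Let X be the 'iterated rational comb': the union over k of spaces X_k, where X₀ = [0,1] with the length metric, and X_{k+1} is obtained from X_k by gluing a copy of [0,1] at each rational point of every last-generation tooth, equipped with the length metric. Then the comb X₁ fails the positive angles property at every point x of its base segment X₀: for every r > 0 there exist two geodesics issuing from x, contained in B(x,r), neither a subset of the other, whose Alexandrov angle at x is zero. -/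
open Set MeasureTheory Metric Filter

/-- The Euclidean comparison angle at `x` of the triangle `(x, p, q)`. -/
noncomputable def compAngle {X : Type*} [MetricSpace X] (x p q : X) : ℝ :=
  Real.arccos ((dist x p ^ 2 + dist x q ^ 2 - dist p q ^ 2) / (2 * dist x p * dist x q))

/-- The Alexandrov (upper) angle at `x` between two geodesics issuing from `x`. -/
noncomputable def alexAngle {X : Type*} [MetricSpace X] (x : X) (γ η : ℝ → X) : ℝ :=
  Filter.limsup (fun s => compAngle x (γ s) (η s)) (nhdsWithin 0 (Set.Ioi 0))

/-- The positive angles property of a set `B` at a point `x`: any two geodesics issuing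
from `x` contained in `B`, neither a subset of the other, make a positive Alexandrov
angle at `x`. -/
def PositiveAnglesAt {X : Type*} [MetricSpace X] (x : X) (B : Set X) : Prop :=
  ∀ γ η : ℝ → X, GeodesicIn B γ → GeodesicIn B η → γ 0 = x → η 0 = x →
    ¬ (γ '' Set.Icc 0 1 ⊆ η '' Set.Icc 0 1) → ¬ (η '' Set.Icc 0 1 ⊆ γ '' Set.Icc 0 1) →
    0 < alexAngle x γ η

lemma comb_helper
    {X : Type*} [MetricSpace X]
    (base : ℝ → X) (tooth : ℚ → ℝ → X)
    (hbase : ∀ s ∈ Set.Icc (0:ℝ) 1, ∀ t ∈ Set.Icc (0:ℝ) 1,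
      dist (base s) (base t) = |s - t|)
    (htooth : ∀ q : ℚ, (q:ℝ) ∈ Set.Icc (0:ℝ) 1 →
      ∀ s ∈ Set.Icc (0:ℝ) 1, ∀ t ∈ Set.Icc (0:ℝ) 1,
        dist (tooth q s) (tooth q t) = |s - t|)
    (hglue : ∀ q : ℚ, (q:ℝ) ∈ Set.Icc (0:ℝ) 1 →
      ∀ s ∈ Set.Icc (0:ℝ) 1, ∀ t ∈ Set.Icc (0:ℝ) 1,
        dist (tooth q s) (base t) = s + |(q:ℝ) - t|)
    (t₀ : ℝ) (ht₀ : t₀ ∈ Set.Icc (0:ℝ) 1) (h34 : t₀ ≤ 3/4) (r : ℝ) (hr : 0 < r) :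
    ∃ γ η : ℝ → X,
      GeodesicIn (Metric.ball (base t₀) r) γ ∧ GeodesicIn (Metric.ball (base t₀) r) η ∧
      γ 0 = base t₀ ∧ η 0 = base t₀ ∧
      ¬ (γ '' Set.Icc 0 1 ⊆ η '' Set.Icc 0 1) ∧
      ¬ (η '' Set.Icc 0 1 ⊆ γ '' Set.Icc 0 1) ∧
      alexAngle (base t₀) γ η = 0 := by
  obtain ⟨ht₀0, ht₀1⟩ := ht₀
  set L : ℝ := min (r/2) (1/4) with hLdef
  have hL0 : 0 < L := lt_min (by linarith) (by norm_num)
  have hLr : L < r := lt_of_le_of_lt (min_le_left _ _) (by linarith)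
  have hL4 : L ≤ 1/4 := min_le_right _ _
  obtain ⟨q, hq1, hq2⟩ := exists_rat_btwn (lt_add_of_pos_right t₀ hL0)
  set d : ℝ := (q:ℝ) - t₀ with hddef
  have hd0 : 0 < d := by simp only [hddef]; linarith
  have hdL : d < L := by simp only [hddef]; linarith
  have hqI : (q:ℝ) ∈ Set.Icc (0:ℝ) 1 := ⟨by linarith, by linarith⟩
  have hmem : ∀ t ∈ Set.Icc (0:ℝ) 1, t₀ + t*L ∈ Set.Icc (0:ℝ) 1 := by
    intro t ⟨h1, h2⟩
    exact ⟨by nlinarith, by nlinarith⟩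
  set γ : ℝ → X := fun t => base (t₀ + t*L) with hγdef
  set η : ℝ → X := fun t => if t*L ≤ d then base (t₀ + t*L) else tooth q (t*L - d)
    with hηdef
  have hγd : ∀ s ∈ Set.Icc (0:ℝ) 1, ∀ t ∈ Set.Icc (0:ℝ) 1,
      dist (γ s) (γ t) = |s - t| * L := by
    intro s hs t ht
    rw [hγdef]
    simp only
    rw [hbase _ (hmem s hs) _ (hmem t ht),
      show t₀ + s*L - (t₀ + t*L) = (s - t) * L by ring, abs_mul, abs_of_pos hL0]
  have htmem : ∀ t ∈ Set.Icc (0:ℝ) 1, ¬ (t*L ≤ d) → t*L - d ∈ Set.Icc (0:ℝ) 1 := by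
    intro t ⟨h1, h2⟩ h3
    push_neg at h3
    exact ⟨by linarith, by nlinarith⟩
  have hηd : ∀ s ∈ Set.Icc (0:ℝ) 1, ∀ t ∈ Set.Icc (0:ℝ) 1,
      dist (η s) (η t) = |s - t| * L := by
    have key : ∀ s ∈ Set.Icc (0:ℝ) 1, ∀ t ∈ Set.Icc (0:ℝ) 1, s*L ≤ d → ¬(t*L ≤ d) →
        dist (η s) (η t) = |s - t| * L := by
      intro s hs t ht hsd htd
      rw [hηdef]
      simp only [if_pos hsd, if_neg htd]
      push_neg at htd
      rw [dist_comm, hglue q hqI _ (htmem t ht (not_le.mpr htd)) _ (hmem s hs)]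
      have hst : s < t := by nlinarith
      rw [show (q:ℝ) - (t₀ + s*L) = d - s*L by rw [hddef]; ring,
        abs_of_nonneg (by linarith), abs_of_nonpos (by linarith : s - t ≤ 0)]
      ring
    intro s hs t ht
    by_cases hsd : s*L ≤ d <;> by_cases htd : t*L ≤ d
    · rw [hηdef]; simp only [if_pos hsd, if_pos htd]
      rw [hbase _ (hmem s hs) _ (hmem t ht),
        show t₀ + s*L - (t₀ + t*L) = (s - t) * L by ring, abs_mul, abs_of_pos hL0]
    · exact key s hs t ht hsd htd
    · rw [dist_comm, key t ht s hs htd hsd, abs_sub_comm]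
    · rw [hηdef]; simp only [if_neg hsd, if_neg htd]
      rw [htooth q hqI _ (htmem s hs hsd) _ (htmem t ht htd),
        show s*L - d - (t*L - d) = (s - t) * L by ring, abs_mul, abs_of_pos hL0]
  have h01 : (0:ℝ) ∈ Set.Icc (0:ℝ) 1 := by norm_num
  have h11 : (1:ℝ) ∈ Set.Icc (0:ℝ) 1 := by norm_num
  have hγ0 : γ 0 = base t₀ := by rw [hγdef]; norm_num
  have hη0 : η 0 = base t₀ := by
    rw [hηdef]; simp only [zero_mul, if_pos hd0.le, add_zero]
  have hγgeo : IsGeodesicSegment γ := by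
    intro s hs t ht
    rw [hγd s hs t ht, hγd 0 h01 1 h11]
    norm_num
  have hηgeo : IsGeodesicSegment η := by
    intro s hs t ht
    rw [hηd s hs t ht, hηd 0 h01 1 h11]
    norm_num
  have hγball : ∀ t ∈ Set.Icc (0:ℝ) 1, γ t ∈ Metric.ball (base t₀) r := by
    intro t ht
    rw [Metric.mem_ball, ← hγ0, hγd t ht 0 h01]
    have : |t - 0| ≤ 1 := by rw [abs_of_nonneg (by linarith [ht.1])]; linarith [ht.2]
    nlinarith
  have hηball : ∀ t ∈ Set.Icc (0:ℝ) 1, η t ∈ Metric.ball (base t₀) r := by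
    intro t ht
    rw [Metric.mem_ball, ← hη0, hηd t ht 0 h01]
    have : |t - 0| ≤ 1 := by rw [abs_of_nonneg (by linarith [ht.1])]; linarith [ht.2]
    nlinarith
  refine ⟨γ, η, ⟨hγgeo, hγball⟩, ⟨hηgeo, hηball⟩, hγ0, hη0, ?_, ?_, ?_⟩
  · -- γ image not contained in η image
    intro hsub
    obtain ⟨t, ht, hte⟩ := hsub ⟨1, h11, rfl⟩
    have hpos : 0 < dist (η t) (γ 1) := by
      rw [hηdef, hγdef]
      simp only
      by_cases htd : t*L ≤ d
      · rw [if_pos htd, hbase _ (hmem t ht) _ (hmem 1 h11)]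
        have : t₀ + t*L - (t₀ + 1*L) ≤ -(L - d) := by linarith
        rw [abs_sub_comm, abs_of_nonneg (by linarith)]
        linarith
      · rw [if_neg htd, hglue q hqI _ (htmem t ht htd) _ (hmem 1 h11)]
        push_neg at htd
        have : |(q:ℝ) - (t₀ + 1*L)| ≥ 0 := abs_nonneg _
        linarith
    rw [hte] at hpos
    simp at hpos
  · -- η image not contained in γ image
    intro hsub
    obtain ⟨t, ht, hte⟩ := hsub ⟨1, h11, rfl⟩
    have hη1 : η 1 = tooth q (L - d) := by
      rw [hηdef]
      simp only [one_mul, if_neg (not_le.mpr hdL)]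
    have hpos : 0 < dist (γ t) (η 1) := by
      rw [hη1, hγdef, dist_comm]
      simp only
      rw [hglue q hqI _ ⟨by linarith, by linarith⟩ _ (hmem t ht)]
      have : |(q:ℝ) - (t₀ + t*L)| ≥ 0 := abs_nonneg _
      linarith
    rw [hte] at hpos
    simp at hpos
  · -- the Alexandrov angle is zero
    have hev : ∀ᶠ s in nhdsWithin (0:ℝ) (Set.Ioi 0),
        compAngle (base t₀) (γ s) (η s) = 0 := by
      filter_upwards [Ioo_mem_nhdsGT_of_mem
        (show (0:ℝ) ∈ Set.Ico (0:ℝ) (d/L) from ⟨le_refl _, div_pos hd0 hL0⟩)]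
        with s hs
      obtain ⟨hs0, hsd⟩ := hs
      have hsI : s ∈ Set.Icc (0:ℝ) 1 := by
        constructor
        · linarith
        · have : d/L < 1 := (div_lt_one hL0).mpr hdL
          linarith
      have hsLd : s * L ≤ d := by
        have := (lt_div_iff₀ hL0).mp hsd
        linarith
      have heq : η s = γ s := by
        rw [hηdef, hγdef]; simp only [if_pos hsLd]
      have ha : dist (base t₀) (γ s) = s * L := by
        rw [← hγ0, dist_comm, hγd s hsI 0 h01]
        rw [abs_of_nonneg (by linarith : (0:ℝ) ≤ s - 0)]
        ring
      have ha0 : (0:ℝ) < s * L := mul_pos hs0 hL0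
      rw [compAngle, heq, dist_self, ha]
      have : (s*L ^ 2 : ℝ) = s*L^2 := rfl
      have harg : ((s*L) ^ 2 + (s*L) ^ 2 - (0:ℝ) ^ 2) / (2 * (s*L) * (s*L)) = 1 := by
        field_simp
        ring
      rw [harg, Real.arccos_one]
    rw [alexAngle, Filter.limsup_congr hev]
    exact Filter.limsup_const (0:ℝ)

theorem rational_comb_fails_positive_angles'
    {X : Type*} [MetricSpace X]
    (base : ℝ → X) (tooth : ℚ → ℝ → X)
    (hbase : ∀ s ∈ Set.Icc (0:ℝ) 1, ∀ t ∈ Set.Icc (0:ℝ) 1,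
      dist (base s) (base t) = |s - t|)
    (htooth : ∀ q : ℚ, (q:ℝ) ∈ Set.Icc (0:ℝ) 1 →
      ∀ s ∈ Set.Icc (0:ℝ) 1, ∀ t ∈ Set.Icc (0:ℝ) 1,
        dist (tooth q s) (tooth q t) = |s - t|)
    (hglue : ∀ q : ℚ, (q:ℝ) ∈ Set.Icc (0:ℝ) 1 →
      ∀ s ∈ Set.Icc (0:ℝ) 1, ∀ t ∈ Set.Icc (0:ℝ) 1,
        dist (tooth q s) (base t) = s + |(q:ℝ) - t|) :
    ∀ t₀ ∈ Set.Icc (0:ℝ) 1, ∀ r > (0:ℝ),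
      ∃ γ η : ℝ → X,
        GeodesicIn (Metric.ball (base t₀) r) γ ∧ GeodesicIn (Metric.ball (base t₀) r) η ∧
        γ 0 = base t₀ ∧ η 0 = base t₀ ∧
        ¬ (γ '' Set.Icc 0 1 ⊆ η '' Set.Icc 0 1) ∧
        ¬ (η '' Set.Icc 0 1 ⊆ γ '' Set.Icc 0 1) ∧
        alexAngle (base t₀) γ η = 0 := by
  intro t₀ ht₀ r hr
  rcases le_or_gt t₀ (3/4) with h34 | h34
  · exact comb_helper base tooth hbase htooth hglue t₀ ht₀ h34 r hr
  · -- reflect the comb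
    set base' : ℝ → X := fun u => base (1 - u) with hb'
    set tooth' : ℚ → ℝ → X := fun p => tooth (1 - p) with ht'
    have hrefl : ∀ u : ℝ, u ∈ Set.Icc (0:ℝ) 1 → (1 - u) ∈ Set.Icc (0:ℝ) 1 := by
      intro u ⟨h1, h2⟩; exact ⟨by linarith, by linarith⟩
    have hbase' : ∀ s ∈ Set.Icc (0:ℝ) 1, ∀ t ∈ Set.Icc (0:ℝ) 1,
        dist (base' s) (base' t) = |s - t| := by
      intro s hs t ht
      rw [hb']
      simp only
      rw [hbase _ (hrefl s hs) _ (hrefl t ht),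
        show (1 - s) - (1 - t) = t - s by ring, abs_sub_comm]
    have hcast : ∀ p : ℚ, ((1 - p : ℚ) : ℝ) = 1 - (p:ℝ) := by intro p; push_cast; ring
    have htooth' : ∀ p : ℚ, (p:ℝ) ∈ Set.Icc (0:ℝ) 1 →
        ∀ s ∈ Set.Icc (0:ℝ) 1, ∀ t ∈ Set.Icc (0:ℝ) 1,
          dist (tooth' p s) (tooth' p t) = |s - t| := by
      intro p hp s hs t ht
      rw [ht']
      simp only
      exact htooth (1 - p) (by rw [hcast]; exact hrefl _ hp) s hs t ht
    have hglue' : ∀ p : ℚ, (p:ℝ) ∈ Set.Icc (0:ℝ) 1 →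
        ∀ s ∈ Set.Icc (0:ℝ) 1, ∀ t ∈ Set.Icc (0:ℝ) 1,
          dist (tooth' p s) (base' t) = s + |(p:ℝ) - t| := by
      intro p hp s hs t ht
      rw [ht', hb']
      simp only
      rw [hglue (1 - p) (by rw [hcast]; exact hrefl _ hp) s hs _ (hrefl t ht), hcast,
        show (1 - (p:ℝ)) - (1 - t) = t - (p:ℝ) by ring, abs_sub_comm]
    have ht₀' : (1 - t₀) ∈ Set.Icc (0:ℝ) 1 := hrefl t₀ ht₀
    have heqb : base' (1 - t₀) = base t₀ := by rw [hb']; norm_num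
    obtain ⟨γ, η, hγ, hη, hγ0, hη0, hns1, hns2, hang⟩ :=
      comb_helper base' tooth' hbase' htooth' hglue' (1 - t₀) ht₀'
        (by linarith [ht₀.2]) r hr
    rw [heqb] at hγ hη hγ0 hη0 hang
    exact ⟨γ, η, hγ, hη, hγ0, hη0, hns1, hns2, hang⟩


/-- The rational comb `X₁` fails the positive angles property at every point of its base
segment: for every `x = base t₀` and every `r > 0` there are two geodesics issuing from
`x`, contained in `B(x,r)`, neither a subset of the other, with Alexandrov angle zero. -/
theorem rational_comb_fails_positive_angles
    {X : Type*} [MetricSpace X] (hX : CAT0 X)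
    (base : ℝ → X) (tooth : ℚ → ℝ → X)
    -- the base is a unit segment
    (hbase : ∀ s ∈ Set.Icc (0:ℝ) 1, ∀ t ∈ Set.Icc (0:ℝ) 1,
      dist (base s) (base t) = |s - t|)
    -- at each rational point of the base a unit segment (a tooth) is glued
    (hfoot : ∀ q : ℚ, (q:ℝ) ∈ Set.Icc (0:ℝ) 1 → tooth q 0 = base (q:ℝ))
    (htooth : ∀ q : ℚ, (q:ℝ) ∈ Set.Icc (0:ℝ) 1 →
      ∀ s ∈ Set.Icc (0:ℝ) 1, ∀ t ∈ Set.Icc (0:ℝ) 1,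
        dist (tooth q s) (tooth q t) = |s - t|)
    -- the length metric: the distance from a tooth point to a base point goes
    -- through the foot of the tooth
    (hglue : ∀ q : ℚ, (q:ℝ) ∈ Set.Icc (0:ℝ) 1 →
      ∀ s ∈ Set.Icc (0:ℝ) 1, ∀ t ∈ Set.Icc (0:ℝ) 1,
        dist (tooth q s) (base t) = s + |(q:ℝ) - t|) :
    ∀ t₀ ∈ Set.Icc (0:ℝ) 1, ∀ r > (0:ℝ),
      ∃ γ η : ℝ → X,
        GeodesicIn (Metric.ball (base t₀) r) γ ∧ GeodesicIn (Metric.ball (base t₀) r) η ∧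
        γ 0 = base t₀ ∧ η 0 = base t₀ ∧
        ¬ (γ '' Set.Icc 0 1 ⊆ η '' Set.Icc 0 1) ∧
        ¬ (η '' Set.Icc 0 1 ⊆ γ '' Set.Icc 0 1) ∧
        alexAngle (base t₀) γ η = 0 :=
  rational_comb_fails_positive_angles' base tooth hbase htooth hglue
end
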